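/- With the notation of the previous statement (V integrable, ∫₀^∞ y^p|V(y)|dy < ∞, 0 < p < 1), for all ξ, η ∈ ℝ the functionals satisfy ‖l_ξ − l_η‖ ≤ C |ξ−η|^(p/2) (∫₀^∞ y^p |V(y)| dy)^(1/2), where C is an absolute constant (one may take C = 2). -/

import Mathlib

/-!
The difference `l_ξ - l_η` is the functional `u ↦ ⟪k, u⟫` with the L² kernel
`k y = (sin (ξ y) - sin (η y)) √|V y|`, so its norm is `‖k‖₂`. Interpolating between
`|sin a - sin b| ≤ |a - b|` and `|sin a - sin b| ≤ 2` gives `|sin a - sin b| ≤ 2 |a - b|^(p/2)`,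
hence `|k y|² ≤ 4 |ξ - η|^p y^p |V y|`, and integrating yields the bound.
-/

open MeasureTheory Set

lemma Real.abs_sin_sub_sin_le_two_mul_rpow (a b : ℝ) {q : ℝ} (hq0 : 0 ≤ q) (hq1 : q ≤ 1) :
    |Real.sin a - Real.sin b| ≤ 2 * |a - b| ^ q := by
  rcases le_total |a - b| 1 with h | h
  · calc |Real.sin a - Real.sin b| ≤ |a - b| := Real.abs_sin_sub_sin_le a b
      _ = |a - b| ^ (1 : ℝ) := (Real.rpow_one _).symm
      _ ≤ |a - b| ^ q := Real.rpow_le_rpow_of_exponent_ge' (abs_nonneg _) h hq0 hq1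
      _ ≤ 2 * |a - b| ^ q := le_mul_of_one_le_left (by positivity) one_le_two
  · calc |Real.sin a - Real.sin b| ≤ |Real.sin a| + |Real.sin b| := abs_sub _ _
      _ ≤ 2 * 1 := by linarith [Real.abs_sin_le_one a, Real.abs_sin_le_one b]
      _ ≤ 2 * |a - b| ^ q := by gcongr; exact Real.one_le_rpow h hq0

section

variable {α : Type*} [MeasurableSpace α] {μ : Measure α}

lemma MeasureTheory.Integrable.memLp_two_sqrt_norm {E : Type*} [NormedAddCommGroup E]
    {f : α → E} (hf : Integrable f μ) : MemLp (fun y => √‖f y‖) 2 μ := by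
  have hm : AEStronglyMeasurable (fun y => √‖f y‖) μ :=
    Real.continuous_sqrt.comp_aestronglyMeasurable hf.1.norm
  refine (memLp_two_iff_integrable_sq_norm hm).2 (hf.norm.congr ?_)
  filter_upwards with y
  rw [Real.norm_eq_abs, sq_abs, Real.sq_sqrt (norm_nonneg _)]

lemma MeasureTheory.MemLp.norm_toLp_two_le {E : Type*} [NormedAddCommGroup E]
    {f : α → E} (hf : MemLp f 2 μ) {g : α → ℝ} (hg : Integrable g μ)
    (hfg : ∀ᵐ y ∂μ, ‖f y‖ ^ 2 ≤ g y) : ‖hf.toLp f‖ ≤ √(∫ y, g y ∂μ) := by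
  rw [Lp.norm_toLp, hf.eLpNorm_eq_integral_rpow_norm two_ne_zero ENNReal.ofNat_ne_top,
    ENNReal.toReal_ofReal (by positivity), Real.sqrt_eq_rpow]
  simp only [ENNReal.toReal_ofNat, Real.rpow_two, one_div]
  exact Real.rpow_le_rpow (integral_nonneg fun y => by positivity)
    (integral_mono_ae ((memLp_two_iff_integrable_sq_norm hf.1).1 hf) hg hfg) (by norm_num)

lemma MeasureTheory.L2.inner_toLp_ofReal {g : α → ℝ}
    (hg : MemLp (fun y => (g y : ℂ)) 2 μ) (u : Lp ℂ 2 μ) :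
    inner ℂ (hg.toLp _) u = ∫ y, (g y : ℂ) * u y ∂μ := by
  rw [L2.inner_def]
  refine integral_congr_ae ?_
  filter_upwards [hg.coeFn_toLp] with y hy
  rw [RCLike.inner_apply, hy, Complex.conj_ofReal, mul_comm]

end

noncomputable def sinKernel (V : ℝ → ℂ) (t y : ℝ) : ℝ := Real.sin (t * y) * √‖V y‖

lemma memLp_sinKernel {μ : Measure ℝ} {V : ℝ → ℂ} (hV : Integrable V μ) (t : ℝ) :
    MemLp (fun y => (sinKernel V t y : ℂ)) 2 μ := by
  refine hV.memLp_two_sqrt_norm.of_le ?_ (.of_forall fun y => ?_)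
  · exact Complex.continuous_ofReal.comp_aestronglyMeasurable
      ((Real.continuous_sin.comp (continuous_const_mul t)).aestronglyMeasurable.mul
        hV.memLp_two_sqrt_norm.1)
  · rw [Complex.norm_real, sinKernel, norm_mul]
    exact mul_le_of_le_one_left (norm_nonneg _) (Real.abs_sin_le_one _)

lemma sq_sinKernel_sub_le (V : ℝ → ℂ) {p : ℝ} (hp0 : 0 ≤ p) (hp2 : p ≤ 2) (ξ η : ℝ) {y : ℝ}
    (hy : 0 ≤ y) :
    (sinKernel V ξ y - sinKernel V η y) ^ 2 ≤ 4 * |ξ - η| ^ p * (y ^ p * ‖V y‖) := by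
  have hsin : |Real.sin (ξ * y) - Real.sin (η * y)| ≤ 2 * (|ξ - η| * y) ^ (p / 2) := by
    simpa [← sub_mul, abs_mul, abs_of_nonneg hy] using
      Real.abs_sin_sub_sin_le_two_mul_rpow (ξ * y) (η * y) (by linarith) (by linarith : p / 2 ≤ 1)
  have hsq : (2 * (|ξ - η| * y) ^ (p / 2)) ^ 2 = 4 * |ξ - η| ^ p * y ^ p := by
    rw [mul_pow, ← Real.rpow_mul_natCast (by positivity), Real.mul_rpow (abs_nonneg _) hy]
    norm_num
    ring
  calc (sinKernel V ξ y - sinKernel V η y) ^ 2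
      = |Real.sin (ξ * y) - Real.sin (η * y)| ^ 2 * ‖V y‖ := by
        rw [sinKernel, sinKernel, ← sub_mul, mul_pow, sq_abs, Real.sq_sqrt (norm_nonneg _)]
    _ ≤ (2 * (|ξ - η| * y) ^ (p / 2)) ^ 2 * ‖V y‖ := by gcongr
    _ = 4 * |ξ - η| ^ p * (y ^ p * ‖V y‖) := by rw [hsq]; ring

/-- Hölder continuity of the family of functionals
`l_ξ(u) = ∫₀^∞ sin(ξ y) √|V(y)| u(y) dy` on `L²((0,∞))`. -/
theorem l_xi_holder (V : ℝ → ℂ) (p : ℝ) (hp : 0 < p) (hp1 : p < 1)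
    (hV : IntegrableOn V (Ioi 0))
    (hVp : IntegrableOn (fun y => y ^ p * ‖V y‖) (Ioi 0))
    (ξ η : ℝ)
    (Lξ Lη : Lp ℂ 2 (volume.restrict (Ioi (0:ℝ))) →L[ℂ] ℂ)
    (hLξ : ∀ u, Lξ u = ∫ y in Ioi (0:ℝ),
        ((Real.sin (ξ * y) * Real.sqrt ‖V y‖ : ℝ) : ℂ) * u y)
    (hLη : ∀ u, Lη u = ∫ y in Ioi (0:ℝ),
        ((Real.sin (η * y) * Real.sqrt ‖V y‖ : ℝ) : ℂ) * u y) :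
    ‖Lξ - Lη‖ ≤ 2 * |ξ - η| ^ (p / 2) *
      (∫ y in Ioi (0:ℝ), y ^ p * ‖V y‖) ^ ((1:ℝ) / 2) := by
  have hξ := memLp_sinKernel hV ξ
  have hη := memLp_sinKernel hV η
  have hL : Lξ - Lη = innerSL ℂ (hξ.toLp _ - hη.toLp _) := by
    ext u
    rw [sub_apply, innerSL_apply_apply, inner_sub_left,
      L2.inner_toLp_ofReal, L2.inner_toLp_ofReal, hLξ, hLη]
    rfl
  have hbound : ∀ᵐ y ∂volume.restrict (Ioi (0:ℝ)),
      ‖(sinKernel V ξ y : ℂ) - sinKernel V η y‖ ^ 2 ≤ 4 * |ξ - η| ^ p * (y ^ p * ‖V y‖) := by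
    filter_upwards [ae_restrict_mem measurableSet_Ioi] with y hy
    rw [← Complex.ofReal_sub, Complex.norm_real, Real.norm_eq_abs, sq_abs]
    exact sq_sinKernel_sub_le V hp.le (by linarith) ξ η (le_of_lt hy)
  rw [hL, innerSL_apply_norm, ← MemLp.toLp_sub]
  calc _ ≤ √(∫ y in Ioi (0:ℝ), 4 * |ξ - η| ^ p * (y ^ p * ‖V y‖)) :=
        (hξ.sub hη).norm_toLp_two_le (hVp.const_mul _) hbound
    _ = 2 * |ξ - η| ^ (p / 2) * (∫ y in Ioi (0:ℝ), y ^ p * ‖V y‖) ^ ((1:ℝ) / 2) := by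
        rw [integral_const_mul, Real.sqrt_mul (by positivity), Real.sqrt_mul zero_le_four,
          show (4 : ℝ) = 2 ^ 2 by norm_num, Real.sqrt_sq zero_le_two, Real.sqrt_eq_rpow,
          Real.sqrt_eq_rpow, ← Real.rpow_mul (abs_nonneg _)]
        ring_nf
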